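/- Let Z be standard normal, μ ∈ ℝ, s > 0, and 𝐝 = μ + sZ. Then |d/dμ E[N(𝐝)²]| = E[2N(𝐝)φ(𝐝)] ≤ 2/√(2π). Consequently, if μ(v) = C - (ln v)/(σ√τ) for constants C ∈ ℝ, σ, τ > 0, then |∂/∂v E[N(μ(v)+sZ)²]| ≤ 2/(v σ √(2πτ)). -/

import Mathlib

open MeasureTheory ProbabilityTheory

/-- Standard normal CDF. -/
noncomputable def stdNormalCDF (x : ℝ) : ℝ :=
  ∫ z in Set.Iic x, (Real.sqrt (2 * Real.pi))⁻¹ * Real.exp (-z ^ 2 / 2)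

/-- Standard normal density. -/
noncomputable def stdNormalPDF (x : ℝ) : ℝ :=
  (Real.sqrt (2 * Real.pi))⁻¹ * Real.exp (-x ^ 2 / 2)

/-!
Since `0 ≤ N ≤ 1` and `0 ≤ φ ≤ 1/√(2π)`, the derivative `(N²)' = 2Nφ` is bounded by `2/√(2π)`.
A constant dominates it, so differentiation under the Gaussian expectation is legitimate, and
the expectation of `2Nφ` obeys the same bound. The second claim is the chain rule, with
`dμ/dv = -1/(vσ√τ)`.
-/

open Real

section ParametricIntegral

variable {E : Type*} [NormedAddCommGroup E] [NormedSpace ℝ E]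

theorem hasDerivAt_setIntegral_Iic [CompleteSpace E] {f : ℝ → E} (hf : Continuous f)
    (hfi : Integrable f) (x : ℝ) : HasDerivAt (fun y => ∫ t in Set.Iic y, f t) (f x) x := by
  have hsplit : (fun y => ∫ t in Set.Iic y, f t) =
      fun y => (∫ t in Set.Iic 0, f t) + ∫ t in 0..y, f t := by
    funext y
    rw [← intervalIntegral.integral_Iic_sub_Iic hfi.integrableOn hfi.integrableOn]
    abel
  rw [hsplit]
  exact (intervalIntegral.integral_hasDerivAt_right (hf.intervalIntegrable 0 x)
    (hf.stronglyMeasurableAtFilter _ _) hf.continuousAt).const_add _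

theorem hasDerivAt_integral_comp_add_mul {μ : Measure ℝ} [IsFiniteMeasure μ] {F F' : ℝ → E}
    {K : ℝ} (hF : ∀ x, HasDerivAt F (F' x) x) (hF' : StronglyMeasurable F')
    (hF'K : ∀ x, ‖F' x‖ ≤ K) (s m : ℝ) (hFint : Integrable (fun z => F (m + s * z)) μ) :
    HasDerivAt (fun m => ∫ z, F (m + s * z) ∂μ) (∫ z, F' (m + s * z) ∂μ) m := by
  have hFcont : Continuous F := continuous_iff_continuousAt.2 fun x => (hF x).continuousAt
  exact (hasDerivAt_integral_of_dominated_loc_of_deriv_le (Metric.ball_mem_nhds m one_pos)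
    (F := fun x z => F (x + s * z)) (F' := fun x z => F' (x + s * z)) (bound := fun _ => K)
    (.of_forall fun x => (hFcont.comp (by fun_prop)).aestronglyMeasurable) hFint
    (hF'.comp_measurable (by fun_prop)).aestronglyMeasurable
    (.of_forall fun z x _ => hF'K _) (integrable_const K)
    (.of_forall fun z x _ => (hF (x + s * z)).comp_add_const x (s * z))).2

end ParametricIntegral

theorem stdNormalPDF_eq_gaussianPDFReal : stdNormalPDF = gaussianPDFReal 0 1 := by
  ext x
  simp [stdNormalPDF, gaussianPDFReal]

@[fun_prop]
theorem continuous_stdNormalPDF : Continuous stdNormalPDF := by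
  unfold stdNormalPDF
  fun_prop

theorem integrable_stdNormalPDF : Integrable stdNormalPDF := by
  simpa [stdNormalPDF_eq_gaussianPDFReal] using integrable_gaussianPDFReal 0 1

theorem integral_stdNormalPDF : ∫ x, stdNormalPDF x = 1 := by
  simpa [stdNormalPDF_eq_gaussianPDFReal] using integral_gaussianPDFReal_eq_one 0 one_ne_zero

theorem stdNormalPDF_nonneg (x : ℝ) : 0 ≤ stdNormalPDF x := by
  unfold stdNormalPDF
  positivity

theorem stdNormalPDF_le (x : ℝ) : stdNormalPDF x ≤ (√(2 * π))⁻¹ := by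
  unfold stdNormalPDF
  have hexp : exp (-x ^ 2 / 2) ≤ 1 := exp_le_one_iff.2 (by nlinarith [sq_nonneg x])
  exact mul_le_of_le_one_right (by positivity) hexp

theorem stdNormalCDF_eq_setIntegral (x : ℝ) :
    stdNormalCDF x = ∫ t in Set.Iic x, stdNormalPDF t := rfl

theorem hasDerivAt_stdNormalCDF (x : ℝ) : HasDerivAt stdNormalCDF (stdNormalPDF x) x := by
  simpa only [← stdNormalCDF_eq_setIntegral] using
    hasDerivAt_setIntegral_Iic continuous_stdNormalPDF integrable_stdNormalPDF x

@[fun_prop]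
theorem continuous_stdNormalCDF : Continuous stdNormalCDF :=
  continuous_iff_continuousAt.2 fun x => (hasDerivAt_stdNormalCDF x).continuousAt

theorem stdNormalCDF_nonneg (x : ℝ) : 0 ≤ stdNormalCDF x :=
  setIntegral_nonneg_of_ae (.of_forall stdNormalPDF_nonneg)

theorem stdNormalCDF_le_one (x : ℝ) : stdNormalCDF x ≤ 1 :=
  integral_stdNormalPDF ▸
    setIntegral_le_integral integrable_stdNormalPDF (.of_forall stdNormalPDF_nonneg)

theorem integrable_stdNormalCDF_comp_pow {Ω : Type*} [MeasurableSpace Ω] {μ : Measure Ω}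
    [IsFiniteMeasure μ] {X : Ω → ℝ} (hX : AEMeasurable X μ) (n : ℕ) :
    Integrable (fun ω => stdNormalCDF (X ω) ^ n) μ := by
  have hmeas := (continuous_stdNormalCDF.measurable.comp_aemeasurable hX).pow_const n
  refine .of_bound hmeas.aestronglyMeasurable 1 (.of_forall fun ω => ?_)
  rw [norm_pow, Real.norm_of_nonneg (stdNormalCDF_nonneg _)]
  exact pow_le_one₀ (stdNormalCDF_nonneg _) (stdNormalCDF_le_one _)

theorem hasDerivAt_stdNormalCDF_sq (x : ℝ) :
    HasDerivAt (fun x => stdNormalCDF x ^ 2) (2 * stdNormalCDF x * stdNormalPDF x) x := by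
  simpa using (hasDerivAt_stdNormalCDF x).fun_pow 2

theorem abs_two_mul_stdNormalCDF_mul_stdNormalPDF_le (x : ℝ) :
    |2 * stdNormalCDF x * stdNormalPDF x| ≤ 2 / √(2 * π) := by
  have hN₀ := stdNormalCDF_nonneg x
  have hN₁ := stdNormalCDF_le_one x
  have hφ₀ := stdNormalPDF_nonneg x
  have hφ₁ := stdNormalPDF_le x
  rw [abs_of_nonneg (by positivity), div_eq_mul_inv, mul_assoc]
  gcongr
  exact mul_le_of_le_one_left hφ₀ hN₁ |>.trans hφ₁

theorem abs_integral_two_mul_stdNormalCDF_mul_stdNormalPDF_le {Ω : Type*} [MeasurableSpace Ω]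
    (μ : Measure Ω) [IsProbabilityMeasure μ] (X : Ω → ℝ) :
    |∫ ω, 2 * stdNormalCDF (X ω) * stdNormalPDF (X ω) ∂μ| ≤ 2 / √(2 * π) := by
  simpa using norm_integral_le_of_norm_le_const (μ := μ)
    (.of_forall fun ω => (Real.norm_eq_abs _).trans_le
      (abs_two_mul_stdNormalCDF_mul_stdNormalPDF_le (X ω)))

theorem abs_deriv_comp_const_sub_log_div_le {G g : ℝ → ℝ} {K a : ℝ}
    (hG : ∀ m, HasDerivAt G (g m) m) (hg : ∀ m, |g m| ≤ K) (C : ℝ) (ha : 0 < a) {v : ℝ}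
    (hv : 0 < v) : |deriv (fun v => G (C - log v / a)) v| ≤ K / (v * a) := by
  have hinner : HasDerivAt (fun v => C - log v / a) (-(v⁻¹ / a)) v :=
    ((hasDerivAt_log hv.ne').div_const a).const_sub C
  have hcomp : HasDerivAt (fun v => G (C - log v / a)) (g (C - log v / a) * -(v⁻¹ / a)) v :=
    (hG _).comp v hinner
  rw [hcomp.deriv, abs_mul, abs_neg, abs_of_pos (a := v⁻¹ / a) (by positivity)]
  calc |g (C - log v / a)| * (v⁻¹ / a) ≤ K * (v⁻¹ / a) := by gcongr; exact hg _
    _ = K / (v * a) := by field_simp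

theorem deriv_expectation_Nsq_bound_general (s : ℝ) :
    (∀ m : ℝ,
      HasDerivAt (fun m => ∫ z, stdNormalCDF (m + s * z) ^ 2 ∂(gaussianReal 0 1))
        (∫ z, 2 * stdNormalCDF (m + s * z) * stdNormalPDF (m + s * z) ∂(gaussianReal 0 1)) m ∧
      |∫ z, 2 * stdNormalCDF (m + s * z) * stdNormalPDF (m + s * z) ∂(gaussianReal 0 1)| ≤
        2 / Real.sqrt (2 * Real.pi)) ∧
    (∀ C σ τ : ℝ, 0 < σ → 0 < τ → ∀ v : ℝ, 0 < v →
      |deriv (fun v => ∫ z,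
          stdNormalCDF ((C - Real.log v / (σ * Real.sqrt τ)) + s * z) ^ 2
            ∂(gaussianReal 0 1)) v| ≤
        2 / (v * σ * Real.sqrt (2 * Real.pi * τ))) := by
  have hderiv : ∀ m : ℝ,
      HasDerivAt (fun m => ∫ z, stdNormalCDF (m + s * z) ^ 2 ∂(gaussianReal 0 1))
        (∫ z, 2 * stdNormalCDF (m + s * z) * stdNormalPDF (m + s * z) ∂(gaussianReal 0 1)) m :=
    fun m => hasDerivAt_integral_comp_add_mul hasDerivAt_stdNormalCDF_sq
      (by fun_prop) abs_two_mul_stdNormalCDF_mul_stdNormalPDF_le s m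
      (integrable_stdNormalCDF_comp_pow (by fun_prop) 2)
  have hbound := fun m : ℝ =>
    abs_integral_two_mul_stdNormalCDF_mul_stdNormalPDF_le (gaussianReal 0 1) (m + s * ·)
  refine ⟨fun m => ⟨hderiv m, hbound m⟩, fun C σ τ hσ hτ v hv => ?_⟩
  calc _ ≤ 2 / √(2 * π) / (v * (σ * √τ)) :=
        abs_deriv_comp_const_sub_log_div_le hderiv hbound C (by positivity) hv
    _ = 2 / (v * σ * √(2 * π * τ)) := by
        rw [sqrt_mul (x := 2 * π) (by positivity), div_div]
        ring

theorem deriv_expectation_Nsq_bound (s : ℝ) (hs : 0 < s) :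
    (∀ m : ℝ,
      HasDerivAt (fun m => ∫ z, stdNormalCDF (m + s * z) ^ 2 ∂(gaussianReal 0 1))
        (∫ z, 2 * stdNormalCDF (m + s * z) * stdNormalPDF (m + s * z) ∂(gaussianReal 0 1)) m ∧
      |∫ z, 2 * stdNormalCDF (m + s * z) * stdNormalPDF (m + s * z) ∂(gaussianReal 0 1)| ≤
        2 / Real.sqrt (2 * Real.pi)) ∧
    (∀ C σ τ : ℝ, 0 < σ → 0 < τ → ∀ v : ℝ, 0 < v →
      |deriv (fun v => ∫ z,
          stdNormalCDF ((C - Real.log v / (σ * Real.sqrt τ)) + s * z) ^ 2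
            ∂(gaussianReal 0 1)) v| ≤
        2 / (v * σ * Real.sqrt (2 * Real.pi * τ))) :=
  deriv_expectation_Nsq_bound_general s
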